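/- arXiv:1507.05521 — 7 statements merged into one kernel-verified Lean document; each statement's English description precedes it below -/
import Mathlib

section
/- If a matroid M is k-base-orderable, then for every element x of the ground set, both the deletion M \ x and the contraction M / x are k-base-orderable. -/
open Set Matroid

namespace PaperFormal

variable {α β : Type*}

/-- A `k`-exchange-ordering between bases `B₁` and `B₂` of `M`: a bijection `σ : B₁ → B₂`
such that for every `X ⊆ B₁` with `|X| ≤ k`, both `(B₁ - X) ∪ σ(X)` and `(B₂ - σ(X)) ∪ X`
are bases of `M`. -/
def IsExchangeOrdering (M : Matroid α) (k : ℕ) (B₁ B₂ : Set α) (σ : α → α) : Prop :=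
  Set.BijOn σ B₁ B₂ ∧ ∀ X ⊆ B₁, X.encard ≤ k →
    M.IsBase ((B₁ \ X) ∪ σ '' X) ∧ M.IsBase ((B₂ \ σ '' X) ∪ X)

/-- A matroid is `k`-base-orderable if every pair of bases has a `k`-exchange-ordering. -/
def KBaseOrderable (M : Matroid α) (k : ℕ) : Prop :=
  ∀ B₁ B₂, M.IsBase B₁ → M.IsBase B₂ → ∃ σ, IsExchangeOrdering M k B₁ B₂ σ

/-- A matroid is base-orderable if any two bases `B₁`, `B₂` admit a bijection `σ : B₁ → B₂`
such that all the single-element exchanges along `σ` are feasible in both directions. -/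
def BaseOrderable (M : Matroid α) : Prop :=
  ∀ B₁ B₂, M.IsBase B₁ → M.IsBase B₂ → ∃ σ : α → α, Set.BijOn σ B₁ B₂ ∧
    ∀ x ∈ B₁, M.IsBase ((B₁ \ {x}) ∪ {σ x}) ∧ M.IsBase ((B₂ \ {σ x}) ∪ {x})

/-- Deletion of a set of elements from a matroid. -/
def Del (M : Matroid α) (D : Set α) : Matroid α := M ↾ (M.E \ D)

/-- Contraction of a set of elements in a matroid. -/
def Con (M : Matroid α) (C : Set α) : Matroid α := (Del M✶ C)✶

/-- The rank (as a term of `ℕ∞`) of a set in a matroid: the supremum of the cardinalities of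
independent subsets. -/
noncomputable def eRk (M : Matroid α) (X : Set α) : ℕ∞ :=
  ⨆ I ∈ {I | M.Indep I ∧ I ⊆ X}, I.encard

/-- A circuit: a minimal dependent set. -/
def Circuit (M : Matroid α) (C : Set α) : Prop :=
  M.Dep C ∧ ∀ D, D ⊂ C → M.Indep D

/-- A hyperplane: a maximal proper flat. -/
def Hyperplane (M : Matroid α) (H : Set α) : Prop :=
  M.IsFlat H ∧ H ≠ M.E ∧ ∀ F, M.IsFlat F → H ⊂ F → F = M.E

/-- A cyclic flat: a flat that is a union of circuits, equivalently a flat whose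
restriction has no coloops. -/
def CyclicFlat (M : Matroid α) (F : Set α) : Prop :=
  M.IsFlat F ∧ ∀ e ∈ F, e ∈ M.closure (F \ {e})

/-- `M'` is the principal extension of `M` into the set `Y` by the new element `e`,
characterized by its rank function. -/
def IsPrincipalExt (M : Matroid α) (Y : Set α) (e : α) (M' : Matroid α) : Prop :=
  e ∉ M.E ∧ M'.E = insert e M.E ∧ (∀ X ⊆ M.E, eRk M' X = eRk M X) ∧
  ∀ X ⊆ M.E, eRk M' (insert e X) = min (eRk M X + 1) (eRk M (X ∪ Y))

/-! Bases of `M ＼ D` for coindependent `D` are the bases of `M` avoiding `D`, so exchange orderings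
of `M` restrict. For a nonloop `x`, the bases of `M ／ {x}` are the sets `B` with `insert x B` a
base of `M`. If `k ≥ 1`, an exchange ordering `σ` of two such extended bases fixes `x`, since
exchanging the preimage of `x` alone yields a proper subset of a base; composing `σ` with the
transposition of `x` and `σ x` makes it a bijection between the unextended bases also when
`k = 0`. A loop or coloop is handled by the other operation, since deleting and contracting it
agree. -/

section ExchangeOrdering

variable {M : Matroid α} {k : ℕ} {B₁ B₂ D : Set α} {σ : α → α} {x : α}

lemma IsExchangeOrdering.isBase_left (h : IsExchangeOrdering M k B₁ B₂ σ) : M.IsBase B₁ := by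
  simpa using (h.2 ∅ (empty_subset _) (by simp)).1

lemma IsExchangeOrdering.apply_eq_self_of_mem_inter (h : IsExchangeOrdering M k B₁ B₂ σ)
    (hk : 1 ≤ k) (hx : x ∈ B₁ ∩ B₂) : σ x = x := by
  obtain ⟨z, hz, rfl⟩ := h.1.surjOn hx.2
  have hbase := (h.2 {z} (singleton_subset_iff.2 hz) (by simpa using hk)).1
  rw [image_singleton] at hbase
  have hB₁ : B₁ \ {z} ∪ {σ z} = B₁ := hbase.eq_of_subset_isBase h.isBase_left
    (union_subset sdiff_subset (singleton_subset_iff.2 hx.1))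
  have hfix : σ z = z := by
    rw [← hB₁] at hz
    simpa [eq_comm] using hz
  rw [hfix, hfix]

lemma coindep_singleton_of_not_isColoop (hx : x ∈ M.E) (hcol : ¬ M.IsColoop x) :
    M.Coindep {x} :=
  ((not_isLoop_iff (M := M✶) hx).1 (by rwa [dual_isLoop_iff_isColoop])).indep

lemma KBaseOrderable.delete (hM : KBaseOrderable M k) (hD : M.Coindep D) :
    KBaseOrderable (M ＼ D) k := by
  intro B₁ B₂ hB₁ hB₂
  rw [hD.delete_isBase_iff] at hB₁ hB₂
  obtain ⟨σ, hσ, hexch⟩ := hM B₁ B₂ hB₁.1 hB₂.1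
  refine ⟨σ, hσ, fun X hX hXk ↦ ?_⟩
  have hσX : σ '' X ⊆ B₂ := (image_mono hX).trans hσ.mapsTo.image_subset
  simp only [hD.delete_isBase_iff]
  exact ⟨⟨(hexch X hX hXk).1, (hB₁.2.mono_left sdiff_subset).union_left (hB₂.2.mono_left hσX)⟩,
    ⟨(hexch X hX hXk).2, (hB₂.2.mono_left sdiff_subset).union_left (hB₁.2.mono_left hX)⟩⟩

lemma isBase_contract_singleton_iff (hx : M.IsNonloop x) {B : Set α} :
    (M ／ {x}).IsBase B ↔ x ∉ B ∧ M.IsBase (insert x B) := by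
  rw [hx.indep.contract_isBase_iff, union_singleton, disjoint_singleton_right, and_comm]

lemma IsExchangeOrdering.contract_singleton [DecidableEq α]
    (h : IsExchangeOrdering M k (insert x B₁) (insert x B₂) σ) (hx : M.IsNonloop x)
    (hx₁ : x ∉ B₁) (hx₂ : x ∉ B₂) :
    IsExchangeOrdering (M ／ {x}) k B₁ B₂ (Equiv.swap x (σ x) ∘ σ) := by
  set τ := ⇑(Equiv.swap x (σ x)) ∘ σ
  have hbij : BijOn τ B₁ B₂ := by
    have hσ : BijOn σ B₁ (insert x B₂ \ {σ x}) := by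
      simpa [insert_sdiff_self_of_notMem hx₁] using h.1.sdiff_singleton (mem_insert x B₁)
    refine ((Equiv.image_eq_iff_bijOn _).1 ?_).comp hσ
    have hσx : σ x ∈ insert x B₂ := h.1.mapsTo (mem_insert x B₁)
    rw [image_sdiff (Equiv.injective _),
      (Equiv.swap_bijOn_self (iff_of_true (mem_insert x B₂) hσx)).image_eq, image_singleton,
      Equiv.swap_apply_right, insert_sdiff_self_of_notMem hx₂]
  have himage : ∀ X ⊆ B₁, X.encard ≤ k → τ '' X = σ '' X := by
    intro X hX hXk
    obtain rfl | hne := X.eq_empty_or_nonempty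
    · simp
    have hk : 1 ≤ k := by exact_mod_cast (one_le_encard_iff_nonempty.2 hne).trans hXk
    simp [τ, h.apply_eq_self_of_mem_inter hk ⟨mem_insert x B₁, mem_insert x B₂⟩]
  refine ⟨hbij, fun X hX hXk ↦ ?_⟩
  have hxX : x ∉ X := fun h ↦ hx₁ (hX h)
  have hxτX : x ∉ τ '' X := fun h ↦ hx₂ ((image_mono hX).trans hbij.mapsTo.image_subset h)
  obtain ⟨h₁, h₂⟩ := h.2 X (hX.trans (subset_insert x B₁)) hXk
  rw [← himage X hX hXk] at h₁ h₂
  rw [insert_sdiff_of_notMem _ hxX, insert_union] at h₁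
  rw [insert_sdiff_of_notMem _ hxτX, insert_union] at h₂
  simp only [isBase_contract_singleton_iff hx]
  exact ⟨⟨fun h ↦ h.elim (fun h ↦ hx₁ h.1) hxτX, h₁⟩, ⟨fun h ↦ h.elim (fun h ↦ hx₂ h.1) hxX, h₂⟩⟩

lemma KBaseOrderable.contract_singleton (hM : KBaseOrderable M k) (hx : M.IsNonloop x) :
    KBaseOrderable (M ／ {x}) k := by
  classical
  intro B₁ B₂ hB₁ hB₂
  rw [isBase_contract_singleton_iff hx] at hB₁ hB₂
  obtain ⟨σ, hσ⟩ := hM _ _ hB₁.2 hB₂.2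
  exact ⟨_, hσ.contract_singleton hx hB₁.1 hB₂.1⟩

end ExchangeOrdering

/-- single-element deletions and contractions of a `k`-base-orderable matroid
are `k`-base-orderable. -/
theorem kBaseOrderable_delete_contract (M : Matroid α) (k : ℕ) (hM : KBaseOrderable M k) :
    ∀ x ∈ M.E, KBaseOrderable (Del M {x}) k ∧ KBaseOrderable (Con M {x}) k := by
  intro x hx
  change KBaseOrderable (M ＼ {x}) k ∧ KBaseOrderable (M ／ {x}) k
  refine ⟨?_, ?_⟩
  · by_cases hcol : M.IsColoop x
    · rw [← contract_eq_delete_of_subset_coloops (singleton_subset_iff.2 hcol)]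
      exact hM.contract_singleton hcol.isNonloop
    · exact hM.delete (coindep_singleton_of_not_isColoop hx hcol)
  · by_cases hloop : M.IsLoop x
    · rw [contract_eq_delete_of_subset_loops (singleton_subset_iff.2 hloop)]
      exact hM.delete (coindep_singleton_of_not_isColoop hx hloop.not_isColoop)
    · exact hM.contract_singleton ((not_isLoop_iff hx).1 hloop)

end PaperFormal
end

section
/- If a matroid M is not k-base-orderable, then M has a minor N whose ground set is the disjoint union of two bases of N that have no k-exchange-ordering. -/
open Set Matroid

namespace Set

variable {α β : Type*}

lemma image_piecewise (s X : Set α) (f g : α → β) [∀ x, Decidable (x ∈ s)] :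
    s.piecewise f g '' X = f '' (X ∩ s) ∪ g '' (X \ s) := by
  conv_lhs => rw [← inter_union_sdiff X s, image_union]
  rw [((piecewise_eqOn s f g).mono inter_subset_right).image_eq,
    ((piecewise_eqOn_compl s f g).mono fun _ hx ↦ hx.2).image_eq]

lemma BijOn.piecewise_id_union {B₁ B₂ C : Set α} {σ : α → α} [∀ x, Decidable (x ∈ B₁)]
    (hσ : BijOn σ B₁ B₂) (hB₁C : Disjoint B₁ C) (hB₂C : Disjoint B₂ C) :
    BijOn (B₁.piecewise σ id) (B₁ ∪ C) (B₂ ∪ C) := by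
  have hσ_eqOn_C : EqOn (B₁.piecewise σ id) id C := fun x hx ↦
    piecewise_eq_of_notMem _ _ _ (hB₁C.notMem_of_mem_right hx)
  refine (hσ.congr (piecewise_eqOn B₁ σ id).symm).union
    ((bijOn_id C).congr hσ_eqOn_C.symm) ((injOn_union hB₁C).2 ⟨?_, ?_, ?_⟩)
  · exact hσ.injOn.congr (piecewise_eqOn B₁ σ id).symm
  · exact injOn_id C |>.congr hσ_eqOn_C.symm
  · intro x hx y hy hxy
    rw [piecewise_eq_of_mem _ _ _ hx, hσ_eqOn_C hy] at hxy
    exact hB₂C.notMem_of_mem_left (hσ.mapsTo hx) (hxy ▸ hy)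

end Set

namespace PaperFormal

variable {α : Type*}

lemma del_con_eq_contract_delete (M : Matroid α) (C D : Set α) :
    Del (Con M C) D = M ／ C ＼ D := rfl

lemma IsExchangeOrdering.piecewise_id_union {M N : Matroid α} {k : ℕ} {B₁ B₂ C : Set α}
    {σ : α → α} [∀ x, Decidable (x ∈ B₁)] (hσ : IsExchangeOrdering N k B₁ B₂ σ)
    (hB₁C : Disjoint B₁ C) (hB₂C : Disjoint B₂ C)
    (hN : ∀ B ⊆ B₁ ∪ B₂, N.IsBase B ↔ M.IsBase (B ∪ C)) :
    IsExchangeOrdering M k (B₁ ∪ C) (B₂ ∪ C) (B₁.piecewise σ id) := by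
  obtain ⟨hbij, hexch⟩ := hσ
  refine ⟨hbij.piecewise_id_union hB₁C hB₂C, fun X hX hXk ↦ ?_⟩
  set X₁ := X ∩ B₁
  have hσX₁ : σ '' X₁ ⊆ B₂ := hbij.mapsTo.image_subset.trans' (image_mono inter_subset_right)
  obtain ⟨hbase₁, hbase₂⟩ := hexch X₁ inter_subset_right ((encard_mono inter_subset_left).trans hXk)
  rw [hN _ (union_subset (sdiff_subset.trans subset_union_left) (hσX₁.trans subset_union_right))]
    at hbase₁
  rw [hN _ (union_subset (sdiff_subset.trans subset_union_right)
    (inter_subset_right.trans subset_union_left))] at hbase₂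
  rw [image_piecewise, image_id]
  have hmem : ∀ x, (x ∈ σ '' X₁ → x ∈ B₂) ∧ (x ∈ B₁ → x ∉ C) ∧ (x ∈ B₂ → x ∉ C) ∧
      (x ∈ X → x ∈ B₁ ∨ x ∈ C) := fun x ↦
    ⟨@hσX₁ x, fun h ↦ hB₁C.notMem_of_mem_left h, fun h ↦ hB₂C.notMem_of_mem_left h, @hX x⟩
  refine ⟨(congrArg M.IsBase ?_).mpr hbase₁, (congrArg M.IsBase ?_).mpr hbase₂⟩ <;>
  · ext x
    have := hmem x
    simp only [X₁, mem_union, mem_sdiff, mem_inter_iff] at this ⊢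
    tauto

section ExchangeMinor

variable {M : Matroid α} {B₁ B₂ : Set α}

lemma contract_inter_delete_ground (hB₁ : M.IsBase B₁) (hB₂ : M.IsBase B₂) :
    (M ／ (B₁ ∩ B₂) ＼ (M.E \ (B₁ ∪ B₂))).E = B₁ \ B₂ ∪ B₂ \ B₁ := by
  ext x
  have h₁ : x ∈ B₁ → x ∈ M.E := fun h ↦ hB₁.subset_ground h
  have h₂ : x ∈ B₂ → x ∈ M.E := fun h ↦ hB₂.subset_ground h
  simp only [delete_ground, contract_ground, mem_sdiff, mem_union, mem_inter_iff]
  tauto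

lemma isBase_contract_inter_delete_iff (hB₁ : M.IsBase B₁) {B : Set α}
    (hB : B ⊆ B₁ \ B₂ ∪ B₂ \ B₁) :
    (M ／ (B₁ ∩ B₂) ＼ (M.E \ (B₁ ∪ B₂))).IsBase B ↔ M.IsBase (B ∪ B₁ ∩ B₂) := by
  have hI : M.Indep (B₁ ∩ B₂) := hB₁.indep.subset inter_subset_left
  have hbase : (M ／ (B₁ ∩ B₂)).IsBase (B₁ \ B₂) := by
    rw [hI.contract_isBase_iff, sdiff_union_inter]
    exact ⟨hB₁, disjoint_sdiff_inter⟩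
  have hD : (M ／ (B₁ ∩ B₂)).Coindep (M.E \ (B₁ ∪ B₂)) := by
    refine coindep_iff_subset_compl_isBase.2 ⟨_, hbase, fun x hx ↦ ?_⟩
    simp only [contract_ground, mem_sdiff, mem_union, mem_inter_iff] at hx ⊢
    tauto
  have hdisj : Disjoint B (B₁ ∩ B₂) ∧ Disjoint B (M.E \ (B₁ ∪ B₂)) := by
    refine ⟨disjoint_left.2 fun x hx hx' ↦ ?_, disjoint_left.2 fun x hx hx' ↦ ?_⟩ <;>
    · have := hB hx
      simp only [mem_sdiff, mem_union, mem_inter_iff] at this hx'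
      tauto
  rw [hD.delete_isBase_iff, hI.contract_isBase_iff, and_iff_left hdisj.2, and_iff_left hdisj.1]

end ExchangeMinor

/-- a matroid that is not `k`-base-orderable has a minor whose ground set
is the disjoint union of two bases with no `k`-exchange-ordering. -/
theorem exists_minor_of_not_kBaseOrderable (M : Matroid α) (k : ℕ)
    (h : ¬ KBaseOrderable M k) :
    ∃ C D : Set α, C ⊆ M.E ∧ D ⊆ M.E ∧ Disjoint C D ∧
      ∃ B₁ B₂ : Set α, (Del (Con M C) D).IsBase B₁ ∧ (Del (Con M C) D).IsBase B₂ ∧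
        Disjoint B₁ B₂ ∧ B₁ ∪ B₂ = (Del (Con M C) D).E ∧
        ¬ ∃ σ, IsExchangeOrdering (Del (Con M C) D) k B₁ B₂ σ := by
  simp only [KBaseOrderable, not_forall] at h
  obtain ⟨B₁, B₂, hB₁, hB₂, hno⟩ := h
  have hN := fun B (hB : B ⊆ B₁ \ B₂ ∪ B₂ \ B₁) ↦ isBase_contract_inter_delete_iff hB₁ hB
  simp only [del_con_eq_contract_delete]
  refine ⟨B₁ ∩ B₂, M.E \ (B₁ ∪ B₂), inter_subset_left.trans hB₁.subset_ground, sdiff_subset,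
    disjoint_sdiff_right.mono_left (inter_subset_left.trans subset_union_left),
    B₁ \ B₂, B₂ \ B₁, ?_, ?_, disjoint_sdiff_sdiff, (contract_inter_delete_ground hB₁ hB₂).symm,
    ?_⟩
  · rwa [hN _ subset_union_left, sdiff_union_inter]
  · rwa [hN _ subset_union_right, inter_comm, sdiff_union_inter]
  · rintro ⟨σ, hσ⟩
    classical
    have hlift := hσ.piecewise_id_union disjoint_sdiff_inter
      (inter_comm B₁ B₂ ▸ disjoint_sdiff_inter) hN
    rw [sdiff_union_inter, inter_comm, sdiff_union_inter] at hlift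
    exact hno ⟨_, hlift⟩

end PaperFormal
end

section
/- Let M be a rank-r matroid with exactly 2r elements that is not k-base-orderable. If every single-element contraction M / x is k-base-orderable, then every single-element deletion M \ y is k-base-orderable (and hence M is an excluded minor for the class of k-base-orderable matroids). -/
open Set Matroid

namespace PaperFormal

variable {α β : Type*}

/-
If `y` is a coloop, `M ＼ y = M ／ y`. Otherwise the bases of `M ＼ y` are the bases of `M`
avoiding `y`; two of them are `r`-subsets of a `(2r - 1)`-set, so they share an element `x`.
A `k`-exchange-ordering of `B₁ - x` and `B₂ - x` in `M ／ x`, extended by `x ↦ x`, is one of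
`B₁` and `B₂` in `M`, and since all exchanged sets avoid `y` it is one in `M ＼ y` as well.
-/

lemma del_eq_delete (M : Matroid α) (D : Set α) : Del M D = M ＼ D := rfl

lemma eRk_ground_eq_eRank (M : Matroid α) : eRk M M.E = M.eRank := by
  refine le_antisymm (iSup₂_le fun I hI ↦ hI.1.encard_le_eRank) ?_
  obtain ⟨B, hB⟩ := M.exists_isBase
  rw [← hB.encard_eq_eRank]
  exact le_iSup₂ (f := fun I (_ : I ∈ {I | M.Indep I ∧ I ⊆ M.E}) ↦ I.encard) B
    ⟨hB.indep, hB.subset_ground⟩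

lemma _root_.Set.inter_nonempty_of_encard_lt {A B S : Set α} (hA : A ⊆ S) (hB : B ⊆ S)
    (hlt : S.encard < A.encard + B.encard) : (A ∩ B).Nonempty := by
  rw [← not_disjoint_iff_nonempty_inter]
  intro hdisj
  exact (encard_mono (union_subset hA hB)).not_gt (encard_union_eq hdisj ▸ hlt)

lemma _root_.Matroid.IsBase.delete_isBase {M : Matroid α} {B D : Set α} (hB : M.IsBase B)
    (hBD : Disjoint B D) : (M ＼ D).IsBase B :=
  delete_isBase_iff.2 <| hB.isBasis_ground.isBasis_subset
    (subset_sdiff.2 ⟨hB.subset_ground, hBD⟩) sdiff_subset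

lemma _root_.Matroid.IsBase.contract_diff_singleton_isBase {M : Matroid α} {B : Set α} {x : α}
    (hB : M.IsBase B) (hx : x ∈ B) : (M ／ {x}).IsBase (B \ {x}) := by
  rw [(hB.indep.subset (singleton_subset_iff.2 hx)).contract_isBase_iff, sdiff_union_self,
    union_singleton, insert_eq_of_mem hx]
  exact ⟨hB, disjoint_sdiff_left⟩

namespace IsExchangeOrdering

variable {M : Matroid α} {k : ℕ} {B₁ B₂ : Set α} {σ : α → α}

lemma exchange_subset_union (h : IsExchangeOrdering M k B₁ B₂ σ) {X : Set α} (hX : X ⊆ B₁) :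
    (B₁ \ X) ∪ σ '' X ⊆ B₁ ∪ B₂ ∧ (B₂ \ σ '' X) ∪ X ⊆ B₁ ∪ B₂ :=
  have hσX : σ '' X ⊆ B₂ := (image_mono hX).trans h.1.mapsTo.image_subset
  ⟨union_subset_union sdiff_subset hσX, union_comm B₁ B₂ ▸ union_subset_union sdiff_subset hX⟩

lemma delete (h : IsExchangeOrdering M k B₁ B₂ σ) {D : Set α} (hD : Disjoint (B₁ ∪ B₂) D) :
    IsExchangeOrdering (M ＼ D) k B₁ B₂ σ := by
  refine ⟨h.1, fun X hX hXk ↦ ?_⟩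
  obtain ⟨hsub₁, hsub₂⟩ := h.exchange_subset_union hX
  exact ⟨(h.2 X hX hXk).1.delete_isBase (hD.mono_left hsub₁),
    (h.2 X hX hXk).2.delete_isBase (hD.mono_left hsub₂)⟩

lemma update_of_contract [DecidableEq α] {x : α}
    (h : IsExchangeOrdering (M ／ {x}) k (B₁ \ {x}) (B₂ \ {x}) σ) (hx : M.IsNonloop x)
    (hx₁ : x ∈ B₁) (hx₂ : x ∈ B₂) :
    IsExchangeOrdering M k B₁ B₂ (Function.update σ x x) := by
  set τ := Function.update σ x x
  have hτσ : EqOn τ σ (B₁ \ {x}) := fun z hz ↦ Function.update_of_ne hz.2 _ _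
  have hτx : τ x = x := Function.update_self ..
  have hbij : BijOn τ (insert x (B₁ \ {x})) (insert (τ x) (B₂ \ {x})) :=
    (h.1.congr hτσ.symm).insert (by simp [hτx])
  rw [hτx, insert_sdiff_singleton, insert_sdiff_singleton, insert_eq_of_mem hx₁,
    insert_eq_of_mem hx₂] at hbij
  refine ⟨hbij, fun X hX hXk ↦ ?_⟩
  have hX' : X \ {x} ⊆ B₁ \ {x} := sdiff_subset_sdiff_left hX
  have hmem : ∀ z ≠ x, z ∈ τ '' X ↔ z ∈ σ '' (X \ {x}) := by
    intro z hz
    constructor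
    · rintro ⟨a, haX, rfl⟩
      have hax : a ≠ x := by rintro rfl; exact hz hτx
      exact ⟨a, ⟨haX, hax⟩, (hτσ ⟨hX haX, hax⟩).symm⟩
    · rintro ⟨a, ha, rfl⟩
      exact ⟨a, ha.1, hτσ (hX' ha)⟩
  have hx_img : x ∈ τ '' X ↔ x ∈ X := by
    refine ⟨fun ⟨a, ha, hax⟩ ↦ ?_, fun hxX ↦ ⟨x, hxX, hτx⟩⟩
    rwa [hbij.injOn (hX ha) hx₁ (hax.trans hτx.symm)] at ha
  obtain ⟨hbase₁, hbase₂⟩ := h.2 (X \ {x}) hX' ((encard_mono sdiff_subset).trans hXk)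
  rw [hx.indep.contract_isBase_iff] at hbase₁ hbase₂
  constructor
  · convert hbase₁.1 using 1
    ext z
    rcases eq_or_ne z x with rfl | hz
    · simpa [hx₁, hx_img] using em' (z ∈ X)
    · simp [hz, hmem z hz]
  · convert hbase₂.1 using 1
    ext z
    rcases eq_or_ne z x with rfl | hz
    · simpa [hx₂, hx_img] using em' (z ∈ X)
    · simp [hz, hmem z hz]

end IsExchangeOrdering

theorem kBaseOrderable_deletions_general (M : Matroid α) (k r : ℕ)
    (hr : eRk M M.E = r) (hcard : M.E.encard = 2 * r)
    (hcon : ∀ x ∈ M.E, KBaseOrderable (Con M {x}) k) :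
    ∀ y ∈ M.E, KBaseOrderable (Del M {y}) k := by
  classical
  intro y hy
  by_cases hcoloop : M.IsColoop y
  · rw [del_eq_delete, ← contract_eq_delete_of_subset_coloops (singleton_subset_iff.2 hcoloop)]
    exact hcon y hy
  have hcoindep : M.Coindep {y} := (coindep_iff_compl_spanning (singleton_subset_iff.2 hy)).2 <|
    not_not.1 (mt isColoop_iff_sdiff_not_spanning.2 hcoloop)
  intro B₁ B₂ hB₁ hB₂
  rw [del_eq_delete, hcoindep.delete_isBase_iff] at hB₁ hB₂
  have hBr {B : Set α} (hB : M.IsBase B) : B.encard = r := by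
    rw [hB.encard_eq_eRank, ← eRk_ground_eq_eRank, hr]
  obtain ⟨x, hx₁, hx₂⟩ : (B₁ ∩ B₂).Nonempty := by
    refine inter_nonempty_of_encard_lt (subset_sdiff.2 ⟨hB₁.1.subset_ground, hB₁.2⟩)
      (subset_sdiff.2 ⟨hB₂.1.subset_ground, hB₂.2⟩) ?_
    have hfin : (M.E \ {y}).encard ≠ ⊤ := ne_top_of_le_ne_top
      (hcard ▸ by exact_mod_cast ENat.natCast_ne_top (2 * r)) (encard_mono sdiff_subset)
    rw [hBr hB₁.1, hBr hB₂.1, ← two_mul, ← hcard, ← encard_sdiff_singleton_add_one hy]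
    exact (ENat.lt_add_one_iff' hfin).2 le_rfl
  obtain ⟨σ, hσ⟩ := hcon x (hB₁.1.subset_ground hx₁) _ _
    (hB₁.1.contract_diff_singleton_isBase hx₁) (hB₂.1.contract_diff_singleton_isBase hx₂)
  exact ⟨_, (hσ.update_of_contract (hB₁.1.indep.isNonloop_of_mem hx₁) hx₁ hx₂).delete
    (disjoint_union_left.2 ⟨hB₁.2, hB₂.2⟩)⟩

/-- if a rank-`r` matroid on `2r` elements is not `k`-base-orderable but all
its single-element contractions are, then all its single-element deletions are
`k`-base-orderable as well. -/
theorem kBaseOrderable_deletions (M : Matroid α) (k r : ℕ)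
    (hr : eRk M M.E = r) (hcard : M.E.encard = 2 * r)
    (hM : ¬ KBaseOrderable M k)
    (hcon : ∀ x ∈ M.E, KBaseOrderable (Con M {x}) k) :
    ∀ y ∈ M.E, KBaseOrderable (Del M {y}) k :=
  kBaseOrderable_deletions_general M k r hr hcard hcon

end PaperFormal
end

section
/- Let A and B be bases of a matroid M of rank r. There is no exchange-ordering between A and B (i.e., no bijection σ : A → B such that for every a ∈ A, both (A - {a}) ∪ {σ(a)} and (B - {σ(a)}) ∪ {a} are bases) if and only if there exist subsets X ⊆ A and Y ⊆ B with |X| + |Y| = r + 1 and 2 ≤ |X|, |Y|, such that for every x ∈ X and y ∈ Y, at least one of (A - {x}) ∪ {y} and (B - {y}) ∪ {x} fails to be a basis of M. -/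
/-!
Call `x ∈ A` and `y ∈ B` compatible when both `A - x + y` and `B - y + x` are bases, so that an
exchange-ordering is a perfect matching of the bipartite compatibility graph. By symmetric basis
exchange no vertex of this graph is isolated. By Hall's theorem there is no perfect matching iff
some `S ⊆ A` has fewer than `|S|` neighbours; a minimal such `S` has exactly `|S| - 1`, and then
`X = S` and `Y = B - N(S)` satisfy `|X| + |Y| = r + 1`, with `|X|, |Y| ≥ 2` because no vertex is
isolated. Conversely, for such `X` and `Y` and any matching `σ`, the sets `σ(X)` and `Y` would be
disjoint subsets of `B` of total size `r + 1`.
-/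

open Set Matroid

namespace PaperFormal

variable {α β : Type*}

theorem eRk_ground_eq_encard {M : Matroid α} {B : Set α} (hB : M.IsBase B) :
    eRk M M.E = B.encard := by
  refine le_antisymm (iSup₂_le ?_) (le_iSup₂_of_le B ⟨hB.indep, hB.subset_ground⟩ le_rfl)
  rintro I ⟨hI, -⟩
  obtain ⟨B', hB', hIB'⟩ := hI.exists_isBase_superset
  exact (encard_le_encard hIB').trans (hB'.encard_eq_encard_of_isBase hB).le

theorem _root_.Matroid.IsBase.exists_symm_exchange {M : Matroid α} {A B : Set α} {a : α}
    (hA : M.IsBase A) (hB : M.IsBase B) (ha : a ∈ A) :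
    ∃ b ∈ B, M.IsBase (insert b (A \ {a})) ∧ M.IsBase (insert a (B \ {b})) := by
  by_cases haB : a ∈ B
  · refine ⟨a, haB, ?_, ?_⟩ <;> simpa [insert_eq_of_mem, ha, haB]
  -- The fundamental circuit of `a` in `B` and its fundamental cocircuit in `A` share `a`,
  -- so by orthogonality they share a second element.
  have hC := hB.fundCircuit_isCircuit (hA.subset_ground ha) haB
  have hK := fundCocircuit_isCocircuit ha hA
  obtain ⟨b, ⟨hbC, hbK⟩, hba⟩ := (hC.isCocircuit_inter_nontrivial hK
    ⟨a, M.mem_fundCircuit a B, M.mem_fundCocircuit a A⟩).exists_ne a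
  have hbB : b ∈ B := by simpa [hba] using M.fundCircuit_subset_insert a B hbC
  have hbA : b ∉ A := ((M.fundCocircuit_subset_insert_compl a A hbK).resolve_left hba).2
  refine ⟨b, hbB, hA.exchange_isBase_of_indep hbA ?_, hB.exchange_isBase_of_indep haB ?_⟩
  · rwa [insert_sdiff_singleton_comm hba, ← hA.indep.mem_fundCircuit_iff
      (by simp [hA.closure_eq, hB.subset_ground hbB]) hbA,
      ← hA.mem_fundCocircuit_iff_mem_fundCircuit]
  · rwa [insert_sdiff_singleton_comm hba.symm, ← hB.indep.mem_fundCircuit_iff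
      (by simp [hB.closure_eq, hA.subset_ground ha]) haB]

section Matching

variable {G : α → α → Prop}

section
open Finset

theorem _root_.Finset.exists_bijOn_of_forall_card_le_card_filter [DecidableRel G]
    {A B : Finset α} (hBA : #B ≤ #A) (hall : ∀ S ⊆ A, #S ≤ #{y ∈ B | ∃ x ∈ S, G x y}) :
    ∃ σ : α → α, BijOn σ A B ∧ ∀ a ∈ A, G a (σ a) := by
  classical
  obtain ⟨f, hf, hfG⟩ := (all_card_le_biUnion_card_iff_exists_injective
    fun a : A ↦ {y ∈ B | G a y}).1 fun s ↦ by
      convert hall (s.map (Function.Embedding.subtype _))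
        (fun x hx ↦ by obtain ⟨a, -, rfl⟩ := mem_map.1 hx; exact a.2) using 2
      · simp
      · ext y; simp; tauto
  set σ : α → α := fun x ↦ if h : x ∈ A then f ⟨x, h⟩ else x
  have hσ : ∀ a (ha : a ∈ A), σ a = f ⟨a, ha⟩ := fun a ha ↦ dif_pos ha
  have hmaps : MapsTo σ A B := fun a ha ↦ by
    rw [hσ a ha]; exact (mem_filter.1 (hfG _)).1
  have hinj : InjOn σ A := fun a ha b hb hab ↦ by
    rw [hσ a ha, hσ b hb] at hab; exact congrArg Subtype.val (hf hab)
  exact ⟨σ, ⟨hmaps, hinj, surjOn_of_injOn_of_card_le σ hmaps hinj hBA⟩,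
    fun a ha ↦ by rw [hσ a ha]; exact (mem_filter.1 (hfG ⟨a, ha⟩)).2⟩

theorem _root_.Finset.exists_subset_card_filter_add_one_eq [DecidableRel G] {B S : Finset α}
    (hS : #{y ∈ B | ∃ x ∈ S, G x y} < #S) :
    ∃ T ⊆ S, #{y ∈ B | ∃ x ∈ T, G x y} + 1 = #T := by
  classical
  induction S using strongInduction with | H S ih =>
  obtain ⟨a, ha⟩ : S.Nonempty := card_pos.1 (by omega)
  by_cases h : #{y ∈ B | ∃ x ∈ S.erase a, G x y} < #(S.erase a)
  · obtain ⟨T, hT, hT'⟩ := ih _ (erase_ssubset ha) h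
    exact ⟨T, hT.trans (erase_subset a S), hT'⟩
  · have hmono : #{y ∈ B | ∃ x ∈ S.erase a, G x y} ≤ #{y ∈ B | ∃ x ∈ S, G x y} :=
      card_le_card <| monotone_filter_right B fun _ _ ⟨x, hx, hxy⟩ ↦ ⟨x, mem_of_mem_erase hx, hxy⟩
    have := card_erase_of_mem ha
    exact ⟨S, subset_rfl, by omega⟩

theorem _root_.Finset.exists_unrelated_of_not_exists_bijOn {A B : Finset α} (hAB : #A = #B)
    (hA : ∀ a ∈ A, ∃ b ∈ B, G a b) (hB : ∀ b ∈ B, ∃ a ∈ A, G a b)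
    (h : ¬∃ σ : α → α, BijOn σ A B ∧ ∀ a ∈ A, G a (σ a)) :
    ∃ X ⊆ A, ∃ Y ⊆ B, #X + #Y = #B + 1 ∧ 2 ≤ #X ∧ 2 ≤ #Y ∧ ∀ x ∈ X, ∀ y ∈ Y, ¬G x y := by
  classical
  obtain ⟨S, hSA, hS⟩ : ∃ S ⊆ A, #{y ∈ B | ∃ x ∈ S, G x y} < #S := by
    by_contra! hall
    exact h (exists_bijOn_of_forall_card_le_card_filter hAB.ge hall)
  obtain ⟨T, hTS, hT⟩ := exists_subset_card_filter_add_one_eq hS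
  set N := {y ∈ B | ∃ x ∈ T, G x y}
  have hTA := hTS.trans hSA
  have hT_lt : #T < #A := by
    refine card_lt_card (ssubset_of_subset_of_ne hTA ?_)
    rintro rfl
    rw [show N = B from filter_true_of_mem hB] at hT
    omega
  have hNne : N.Nonempty := by
    obtain ⟨a, ha⟩ : T.Nonempty := card_pos.1 (by omega)
    obtain ⟨b, hb, hab⟩ := hA a (hTA ha)
    exact ⟨b, mem_filter.2 ⟨hb, a, ha, hab⟩⟩
  have hNB : #(B \ N) = #B - #N := card_sdiff_of_subset (filter_subset _ _)
  have := hNne.card_pos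
  refine ⟨T, hTA, B \ N, sdiff_subset, by omega, by omega, by omega, fun x hx y hy hxy ↦ ?_⟩
  exact (mem_sdiff.1 hy).2 (mem_filter.2 ⟨(mem_sdiff.1 hy).1, x, hx, hxy⟩)

end

theorem _root_.Set.not_exists_bijOn_of_forall_not_rel {A B X Y : Set α} (hXA : X ⊆ A)
    (hYB : Y ⊆ B) (hcard : B.encard < X.encard + Y.encard) (hXY : ∀ x ∈ X, ∀ y ∈ Y, ¬G x y) :
    ¬∃ σ : α → α, BijOn σ A B ∧ ∀ a ∈ A, G a (σ a) := by
  rintro ⟨σ, hσ, hσG⟩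
  have hdisj : Disjoint (σ '' X) Y := by
    rw [disjoint_left]
    rintro _ ⟨x, hx, rfl⟩ hy
    exact hXY x hx _ hy (hσG x (hXA hx))
  have := encard_le_encard (union_subset ((image_mono hXA).trans hσ.mapsTo.image_subset) hYB)
  rw [encard_union_eq hdisj, (hσ.injOn.mono hXA).encard_image] at this
  exact this.not_gt hcard

theorem _root_.Set.exists_unrelated_of_not_exists_bijOn {A B : Set α} {n : ℕ}
    (hAn : A.encard = n) (hBn : B.encard = n) (hA : ∀ a ∈ A, ∃ b ∈ B, G a b)
    (hB : ∀ b ∈ B, ∃ a ∈ A, G a b)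
    (h : ¬∃ σ : α → α, BijOn σ A B ∧ ∀ a ∈ A, G a (σ a)) :
    ∃ X ⊆ A, ∃ Y ⊆ B, X.encard + Y.encard = n + 1 ∧ 2 ≤ X.encard ∧ 2 ≤ Y.encard ∧
      ∀ x ∈ X, ∀ y ∈ Y, ¬G x y := by
  obtain ⟨A, rfl⟩ := (finite_of_encard_eq_coe hAn).exists_finset_coe
  obtain ⟨B, rfl⟩ := (finite_of_encard_eq_coe hBn).exists_finset_coe
  simp only [encard_coe_eq_coe_finsetCard, Nat.cast_inj] at hAn hBn
  obtain ⟨X, hXA, Y, hYB, hsum, hX, hY, hXY⟩ :=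
    Finset.exists_unrelated_of_not_exists_bijOn (hAn.trans hBn.symm) hA hB h
  refine ⟨X, by exact_mod_cast hXA, Y, by exact_mod_cast hYB, ?_, ?_, ?_, hXY⟩ <;>
    simp only [encard_coe_eq_coe_finsetCard] <;> norm_cast
  omega

end Matching

/-- bases `A`, `B` of a rank-`r` matroid have no exchange-ordering iff there
are `X ⊆ A`, `Y ⊆ B` with `|X| + |Y| = r + 1`, `|X|, |Y| ≥ 2`, such that for all
`x ∈ X`, `y ∈ Y` at least one of the two single exchanges fails. -/
theorem no_exchangeOrdering_iff (M : Matroid α) (r : ℕ) (hr : eRk M M.E = r)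
    (A B : Set α) (hA : M.IsBase A) (hB : M.IsBase B) :
    (¬ ∃ σ : α → α, Set.BijOn σ A B ∧
        ∀ a ∈ A, M.IsBase ((A \ {a}) ∪ {σ a}) ∧ M.IsBase ((B \ {σ a}) ∪ {a})) ↔
      ∃ X Y : Set α, X ⊆ A ∧ Y ⊆ B ∧ X.encard + Y.encard = r + 1 ∧
        2 ≤ X.encard ∧ 2 ≤ Y.encard ∧
        ∀ x ∈ X, ∀ y ∈ Y,
          ¬ M.IsBase ((A \ {x}) ∪ {y}) ∨ ¬ M.IsBase ((B \ {y}) ∪ {x}) := by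
  have hAr : A.encard = r := (eRk_ground_eq_encard hA).symm.trans hr
  have hBr : B.encard = r := (eRk_ground_eq_encard hB).symm.trans hr
  simp only [← not_and_or, union_singleton]
  constructor
  · intro h
    obtain ⟨X, hXA, Y, hYB, hXY⟩ := exists_unrelated_of_not_exists_bijOn hAr hBr
      (fun a ha ↦ hA.exists_symm_exchange hB ha)
      (fun b hb ↦ (hB.exists_symm_exchange hA hb).imp fun _ ⟨ha, hBa, hAb⟩ ↦ ⟨ha, hAb, hBa⟩) h
    exact ⟨X, Y, hXA, hYB, hXY⟩
  · rintro ⟨X, Y, hXA, hYB, hsum, -, -, hXY⟩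
    refine not_exists_bijOn_of_forall_not_rel hXA hYB ?_ hXY
    rw [hBr, hsum]
    exact_mod_cast Nat.lt_succ_self r

end PaperFormal
end

section
/- Let M be a matroid with rank function r, let e₁,…,eₙ be distinct elements not in E(M), and let F₁,…,Fₙ ⊆ E(M). Define M₀ = M and M_{i+1} = M_i +_{F_{i+1}} e_{i+1}. Then for every i, every X ⊆ E(M), and every J ⊆ {1,…,i}, the rank in M_i satisfies r_i(X ∪ {e_j : j ∈ J}) = min over I ⊆ J of ( r(X ∪ ⋃_{j∈I} F_j) + |J - I| ). In particular, the result of the sequence of principal extensions does not depend on the order in which they are performed. -/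
/-!
Induct on `i`. Adding `e_i` with `i ∈ J` is one principal extension step,
`r_i(Z + e_i) = min (r_{i-1}(Z) + 1) (r_{i-1}(Z ∪ F_i))` with `Z = X ∪ e_{J - i}`, and both terms
are given by the induction hypothesis, the second one with `X ∪ F_i` in place of `X`. Splitting
the subsets `I ⊆ J` according to whether `i ∈ I`, the minimum over `I` of the formula for `J`
is exactly the minimum of these two terms.
-/

open Set Matroid

namespace PaperFormal

variable {α β : Type*}

variable {ι : Type*}

noncomputable def principalExtRankFormula (ρ : Set α → ℕ∞) (F : ι → Set α) (X : Set α)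
    (J : Finset ι) : ℕ∞ :=
  J.powerset.inf fun I => ρ (X ∪ ⋃ j ∈ I, F j) + ((J.card - I.card : ℕ) : ℕ∞)

lemma principalExtRankFormula_empty (ρ : Set α → ℕ∞) (F : ι → Set α) (X : Set α) :
    principalExtRankFormula ρ F X ∅ = ρ X := by
  simp [principalExtRankFormula]

lemma principalExtRankFormula_insert [DecidableEq ι] (ρ : Set α → ℕ∞) (F : ι → Set α)
    (X : Set α) {J : Finset ι} {i : ι} (hi : i ∉ J) :
    principalExtRankFormula ρ F X (insert i J) =
      min (principalExtRankFormula ρ F X J + 1) (principalExtRankFormula ρ F (X ∪ F i) J) := by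
  rw [principalExtRankFormula, Finset.powerset_insert, Finset.inf_union, Finset.inf_image,
    principalExtRankFormula, principalExtRankFormula,
    Finset.apply_inf_eq_inf_comp_of_linearOrder (· + 1) (fun _ _ h => add_le_add_left h 1)
      (top_add 1)]
  congr 1
  · refine Finset.inf_congr rfl fun I hI => ?_
    rw [Function.comp_apply, Finset.card_insert_of_notMem hi,
      Nat.succ_sub (Finset.card_le_card (Finset.mem_powerset.1 hI)), Nat.cast_succ, add_assoc]
  · refine Finset.inf_congr rfl fun I hI => ?_
    have hiI : i ∉ I := fun h => hi (Finset.mem_powerset.1 hI h)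
    rw [Function.comp_apply, Finset.set_biUnion_insert, Finset.card_insert_of_notMem hi,
      Finset.card_insert_of_notMem hiI, Nat.succ_sub_succ, ← Set.union_assoc]

lemma coe_subset_lt_castSucc_of_notMem {n : ℕ} {i : Fin n} {J : Finset (Fin n)}
    (hJ : (↑J : Set (Fin n)) ⊆ {j | (j : ℕ) < i.succ}) (hi : i ∉ J) :
    (↑J : Set (Fin n)) ⊆ {j | (j : ℕ) < i.castSucc} := fun j hj => by
  have hji : j ≤ i := by simpa using hJ hj
  exact hji.lt_of_ne fun h => hi (h ▸ hj)

lemma ground_eq_of_isPrincipalExt_chain {M : Matroid α} {n : ℕ} {e : Fin n → α}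
    {F : Fin n → Set α} {Ms : Fin (n + 1) → Matroid α} (h0 : Ms 0 = M)
    (hstep : ∀ i : Fin n, IsPrincipalExt (Ms i.castSucc) (F i) (e i) (Ms i.succ))
    (i : Fin (n + 1)) : (Ms i).E = M.E ∪ e '' {j | (j : ℕ) < i} := by
  induction i using Fin.induction with
  | zero => simp [h0]
  | succ i ih =>
    have hlt : {j : Fin n | (j : ℕ) < i.succ} = insert i {j : Fin n | (j : ℕ) < i.castSucc} := by
      ext j
      simp [le_iff_eq_or_lt, Fin.val_inj]
    rw [(hstep i).2.1, ih, hlt, Set.image_insert_eq, Set.union_insert]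

theorem iterated_principalExt_rank_general (M : Matroid α) (n : ℕ)
    (e : Fin n → α) (F : Fin n → Set α)
    (hF : ∀ i, F i ⊆ M.E)
    (Ms : Fin (n + 1) → Matroid α) (h0 : Ms 0 = M)
    (hstep : ∀ i : Fin n, IsPrincipalExt (Ms i.castSucc) (F i) (e i) (Ms i.succ)) :
    ∀ (i : Fin (n + 1)) (X : Set α) (J : Finset (Fin n)), X ⊆ M.E →
      (∀ j ∈ J, (j : ℕ) < (i : ℕ)) →
      eRk (Ms i) (X ∪ (e '' (↑J : Set (Fin n)))) =
        J.powerset.inf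
          (fun I => eRk M (X ∪ ⋃ j ∈ I, F j) + ((J.card - I.card : ℕ) : ℕ∞)) := by
  classical
  suffices ∀ (i : Fin (n + 1)) X (J : Finset (Fin n)), X ⊆ M.E →
      (↑J : Set (Fin n)) ⊆ {j | (j : ℕ) < i} →
      eRk (Ms i) (X ∪ e '' ↑J) = principalExtRankFormula (eRk M) F X J from this
  intro i
  induction i using Fin.induction with
  | zero =>
    intro X J _ hJ
    obtain rfl : J = ∅ := Finset.coe_eq_empty.1 (Set.subset_empty_iff.1 (by simpa using hJ))
    rw [Finset.coe_empty, Set.image_empty, Set.union_empty, h0, principalExtRankFormula_empty]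
  | succ i ih =>
    intro X J hX hJ
    have hground := ground_eq_of_isPrincipalExt_chain h0 hstep i.castSucc
    by_cases hiJ : i ∈ J
    · obtain ⟨J, hiJ', rfl⟩ : ∃ J', i ∉ J' ∧ insert i J' = J :=
        ⟨J.erase i, J.notMem_erase i, J.insert_erase hiJ⟩
      have hJ' := coe_subset_lt_castSucc_of_notMem
        ((Finset.coe_subset.2 (Finset.subset_insert i J)).trans hJ) hiJ'
      rw [Finset.coe_insert, Set.image_insert_eq, Set.union_insert,
        (hstep i).2.2.2 _ (hground ▸ Set.union_subset_union hX (Set.image_mono hJ')),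
        ih X J hX hJ', Set.union_right_comm, ih (X ∪ F i) J (Set.union_subset hX (hF i)) hJ',
        principalExtRankFormula_insert _ _ _ hiJ']
    · have hJ' := coe_subset_lt_castSucc_of_notMem hJ hiJ
      rw [(hstep i).2.2.1 _ (hground ▸ Set.union_subset_union hX (Set.image_mono hJ')),
        ih X J hX hJ']

/-- the rank function of an iterated sequence of principal extensions:
`r_i(X ∪ e_J) = min_{I ⊆ J} (r(X ∪ F_I) + |J - I|)`.  In particular, the result of a
sequence of principal extensions does not depend on the order. -/
theorem iterated_principalExt_rank (M : Matroid α) (n : ℕ)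
    (e : Fin n → α) (F : Fin n → Set α)
    (he_inj : Function.Injective e) (he : ∀ i, e i ∉ M.E) (hF : ∀ i, F i ⊆ M.E)
    (Ms : Fin (n + 1) → Matroid α) (h0 : Ms 0 = M)
    (hstep : ∀ i : Fin n, IsPrincipalExt (Ms i.castSucc) (F i) (e i) (Ms i.succ)) :
    ∀ (i : Fin (n + 1)) (X : Set α) (J : Finset (Fin n)), X ⊆ M.E →
      (∀ j ∈ J, (j : ℕ) < (i : ℕ)) →
      eRk (Ms i) (X ∪ (e '' (↑J : Set (Fin n)))) =
        J.powerset.inf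
          (fun I => eRk M (X ∪ ⋃ j ∈ I, F j) + ((J.card - I.card : ℕ) : ℕ∞)) :=
  iterated_principalExt_rank_general M n e F hF Ms h0 hstep

end PaperFormal
end

section
/- Let M' be obtained from a matroid M by relaxing a circuit-hyperplane X of M. If M is base-orderable, then M' is base-orderable. -/
open Set Matroid

namespace PaperFormal

variable {α β : Type*}

/-! The only new base of `M'` is `X`, so the work is to order a pair `(B, X)` with `B` a base of
`M`. Pick `e ∈ B \ X` and, by the exchange axiom in `M'`, some `y ∈ X \ B` such that `B - e + y`
is a base of `M'`. Since `X` is a circuit-hyperplane, swapping any element of `X` for an element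
outside `X` gives a base of `M`; in particular `B' = X - y + e` is one. An exchange ordering
`σ : B → B'` of `M` fixes `B ∩ B'`, and redirecting it to send `e ↦ y` yields an exchange ordering
`B → X` of `M'`. -/

lemma circuit_iff_isCircuit {M : Matroid α} {C : Set α} : Circuit M C ↔ M.IsCircuit C :=
  isCircuit_iff_forall_ssubset.symm

lemma Hyperplane.closure_insert_eq {M : Matroid α} {H : Set α} {e : α} (hH : Hyperplane M H)
    (he : e ∈ M.E) (heH : e ∉ H) : M.closure (insert e H) = M.E :=
  hH.2.2 _ (M.isFlat_closure _)
    ⟨hH.1.closure.symm.subset.trans (M.closure_subset_closure (subset_insert e H)),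
      fun h ↦ heH (h (M.mem_closure_of_mem' (mem_insert e H) he))⟩

lemma Circuit.isBase_insert_sdiff_singleton {M : Matroid α} {X : Set α} {y e : α}
    (hXc : Circuit M X) (hXh : Hyperplane M X) (hy : y ∈ X) (he : e ∈ M.E) (heX : e ∉ X) :
    M.IsBase (insert e (X \ {y})) := by
  have hcl : M.closure (X \ {y}) = X := by
    rw [(circuit_iff_isCircuit.1 hXc).closure_sdiff_singleton_eq, hXh.1.closure]
  have hI : M.Indep (insert e (X \ {y})) :=
    (hXc.2 _ (sdiff_singleton_ssubset.2 hy)).insert_indep_iff.2 (Or.inl ⟨he, by rwa [hcl]⟩)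
  refine hI.isBase_of_spanning ?_
  rw [spanning_iff_closure_eq hI.subset_ground, ← closure_insert_closure_eq_closure_insert, hcl,
    hXh.closure_insert_eq he heX]

/-- `BaseOrderable M` says exactly that any two bases of `M` admit such a `σ`. -/
def IsExchangeBijection (M : Matroid α) (B₁ B₂ : Set α) (σ : α → α) : Prop :=
  BijOn σ B₁ B₂ ∧ ∀ x ∈ B₁, M.IsBase ((B₁ \ {x}) ∪ {σ x}) ∧ M.IsBase ((B₂ \ {σ x}) ∪ {x})

lemma isExchangeBijection_id {M : Matroid α} {B : Set α} (hB : M.IsBase B) :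
    IsExchangeBijection M B B id :=
  ⟨bijOn_id B, fun x hx ↦ by simp [insert_eq_of_mem hx, hB]⟩

namespace IsExchangeBijection

variable {M M' : Matroid α} {B₁ B₂ : Set α} {σ : α → α}

lemma mono (h : IsExchangeBijection M B₁ B₂ σ) (hMM' : ∀ B, M.IsBase B → M'.IsBase B) :
    IsExchangeBijection M' B₁ B₂ σ :=
  ⟨h.1, fun x hx ↦ ⟨hMM' _ (h.2 x hx).1, hMM' _ (h.2 x hx).2⟩⟩

lemma exists_symm (h : IsExchangeBijection M B₁ B₂ σ) : ∃ τ, IsExchangeBijection M B₂ B₁ τ := by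
  rcases B₂.eq_empty_or_nonempty with rfl | ⟨b, -⟩
  · obtain rfl : B₁ = ∅ := eq_empty_of_forall_notMem fun x hx ↦ h.1.mapsTo hx
    exact ⟨id, bijOn_empty _, by simp⟩
  have : Nonempty α := ⟨b⟩
  have hinv := h.1.invOn_invFunOn
  refine ⟨Function.invFunOn σ B₁, h.1.symm hinv.symm, fun x hx ↦ ?_⟩
  have hx' := h.2 _ (h.1.symm hinv.symm |>.mapsTo hx)
  rw [hinv.2 hx] at hx'
  exact hx'.symm

lemma apply_eq_self_of_mem_inter (hB : M.IsBase B₁) (h : IsExchangeBijection M B₁ B₂ σ) {z : α}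
    (hz : z ∈ B₁ ∩ B₂) : σ z = z := by
  obtain ⟨u, hu, hσu⟩ := h.1.surjOn hz.2
  obtain rfl : u = z := by
    by_contra hne
    have hBu := (h.2 u hu).1
    rw [hσu, union_singleton, insert_eq_of_mem (show z ∈ B₁ \ {u} from ⟨hz.1, Ne.symm hne⟩)] at hBu
    exact (hBu.eq_of_subset_isBase hB sdiff_subset ▸ hu).2 rfl
  exact hσu

end IsExchangeBijection

section Relaxation

variable {M M' : Matroid α} {X : Set α} (hXc : Circuit M X) (hXh : Hyperplane M X)
  (hMM' : ∀ B, M.IsBase B → M'.IsBase B) (hX : M'.IsBase X)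
include hXc hXh hMM' hX

lemma isExchangeBijection_update [DecidableEq α] {B : Set α} {e y : α} {σ : α → α}
    (hB : M.IsBase B) (he : e ∈ B \ X) (hy : y ∈ X \ B) (hBey : M'.IsBase (insert y (B \ {e})))
    (hσ : IsExchangeBijection M B (insert e (X \ {y})) σ) :
    IsExchangeBijection M' B X (Function.update σ e y) := by
  have hσe : σ e = e := hσ.apply_eq_self_of_mem_inter hB ⟨he.1, mem_insert _ _⟩
  have hσ_ne : ∀ b ∈ B, b ≠ e → σ b ∈ X \ {y} := fun b hb hbe ↦
    (hσ.1.mapsTo hb).resolve_left fun h ↦ hbe (hσ.1.injOn hb he.1 (h.trans hσe.symm))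
  have hσ_fix : ∀ b ∈ B, b ∈ X → σ b = b := fun b hb hbX ↦
    hσ.apply_eq_self_of_mem_inter hB ⟨hb, Or.inr ⟨hbX, fun h ↦ hy.2 (h ▸ hb)⟩⟩
  refine ⟨?_, fun b hb ↦ ?_⟩
  · have hσ' := hσ.1.sdiff_singleton he.1
    rw [hσe, insert_sdiff_of_mem _ (mem_singleton e),
      sdiff_singleton_eq_self (s := X \ {y}) fun h ↦ he.2 h.1] at hσ'
    have := (hσ'.congr fun b hb ↦ (Function.update_of_ne hb.2 y σ).symm).insert
      (a := e) (by simp)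
    simpa [insert_eq_of_mem he.1, insert_eq_of_mem hy.1] using this
  rcases eq_or_ne b e with rfl | hbe
  · rw [Function.update_self, union_singleton, union_singleton]
    exact ⟨hBey, hMM' _ (hXc.isBase_insert_sdiff_singleton hXh hy.1 (hB.subset_ground hb) he.2)⟩
  rw [Function.update_of_ne hbe]
  refine ⟨hMM' _ (hσ.2 b hb).1, ?_⟩
  by_cases hbX : b ∈ X
  · rwa [hσ_fix b hb hbX, union_singleton, insert_sdiff_singleton, insert_eq_of_mem hbX]
  · rw [union_singleton]
    exact hMM' _
      (hXc.isBase_insert_sdiff_singleton hXh (hσ_ne b hb hbe).1 (hB.subset_ground hb) hbX)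

lemma exists_isExchangeBijection_of_relaxation (hM : BaseOrderable M) {B : Set α}
    (hB : M.IsBase B) : ∃ τ, IsExchangeBijection M' B X τ := by
  classical
  obtain ⟨e, he⟩ : (B \ X).Nonempty := sdiff_nonempty.2 fun hBX ↦
    hXc.1.not_indep ((hMM' B hB).eq_of_subset_isBase hX hBX ▸ hB.indep)
  obtain ⟨y, hy, hBey⟩ := (hMM' B hB).exchange hX he
  obtain ⟨σ, hσ⟩ := hM B _ hB
    (hXc.isBase_insert_sdiff_singleton hXh hy.1 (hB.subset_ground he.1) he.2)
  exact ⟨_, isExchangeBijection_update hXc hXh hMM' hX hB he hy hBey hσ⟩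

end Relaxation

theorem baseOrderable_relaxation_general (M M' : Matroid α) (X : Set α)
    (hXc : Circuit M X) (hXh : Hyperplane M X)
    (hBase : ∀ B, M'.IsBase B ↔ (M.IsBase B ∨ B = X))
    (hM : BaseOrderable M) : BaseOrderable M' := by
  have hMM' : ∀ B, M.IsBase B → M'.IsBase B := fun B hB ↦ (hBase B).2 (Or.inl hB)
  have hX : M'.IsBase X := (hBase X).2 (Or.inr rfl)
  intro B₁ B₂ h₁ h₂
  rw [hBase] at h₁ h₂
  rcases h₁ with h₁ | rfl <;> rcases h₂ with h₂ | rfl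
  · obtain ⟨σ, hσ⟩ := hM B₁ B₂ h₁ h₂
    exact ⟨σ, IsExchangeBijection.mono hσ hMM'⟩
  · exact exists_isExchangeBijection_of_relaxation hXc hXh hMM' hX hM h₁
  · obtain ⟨τ, hτ⟩ := exists_isExchangeBijection_of_relaxation hXc hXh hMM' hX hM h₂
    exact hτ.exists_symm
  · exact ⟨id, isExchangeBijection_id hX⟩

/-- relaxing a circuit-hyperplane of a base-orderable matroid yields a
base-orderable matroid. -/
theorem baseOrderable_relaxation (M M' : Matroid α) (X : Set α)
    (hXc : Circuit M X) (hXh : Hyperplane M X)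
    (hE : M'.E = M.E) (hBase : ∀ B, M'.IsBase B ↔ (M.IsBase B ∨ B = X))
    (hM : BaseOrderable M) : BaseOrderable M' :=
  baseOrderable_relaxation_general M M' X hXc hXh hBase hM

end PaperFormal
end

section
/- A matroid N on the same ground set as M is freer than M (i.e., r_M(X) ≤ r_N(X) for all X) if and only if for every cyclic flat F of N there is a cyclic flat A of M with r_M(A) + |F - A| ≤ r_N(F). -/
open Set Matroid

/-!
Both directions come from the formula `r(X) = min {r(A) + |X - A| : A cyclic flat}`. The
inequality `≤` holds for every set `A`; the minimum is attained at `A = S - K`, where `S = cl(X)`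
and `K` is the set of coloops of `M | S`: removing the coloops of a matroid leaves a cyclic flat,
`K ⊆ X` since an element of `S - X` is spanned by the rest of `S`, and `r(S) = r(A) + |K|`.
-/

namespace Matroid

variable {α : Type*}

lemma eRk_le_eRk_add_encard_sdiff (M : Matroid α) (A X : Set α) :
    M.eRk X ≤ M.eRk A + (X \ A).encard :=
  calc M.eRk X ≤ M.eRk (A ∪ X \ A) := M.eRk_mono (by simp)
    _ ≤ M.eRk A + (X \ A).encard := M.eRk_union_le_eRk_add_encard A (X \ A)

lemma eRk_ground_sdiff_coloops_add_encard (M : Matroid α) :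
    M.eRk (M.E \ M.coloops) + M.coloops.encard = M.eRank := by
  refine le_antisymm ?_ ?_
  · obtain ⟨I, hI⟩ := M.exists_isBasis (M.E \ M.coloops)
    have hIK : M.Indep (I ∪ M.coloops) :=
      (union_indep_iff_indep_of_subset_coloops subset_rfl).2 hI.indep
    rw [hI.eRk_eq_encard, ← encard_union_eq (disjoint_sdiff_left.mono_left hI.subset)]
    exact hIK.encard_le_eRank
  · calc M.eRank = M.eRk (M.E \ M.coloops ∪ M.coloops) := by
          rw [sdiff_union_of_subset M.coloops_subset_ground, eRk_ground]
      _ ≤ M.eRk (M.E \ M.coloops) + M.coloops.encard := M.eRk_union_le_eRk_add_encard _ _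

lemma coloops_restrict_closure_subset {M : Matroid α} {X : Set α} (hX : X ⊆ M.E) :
    (M ↾ M.closure X).coloops ⊆ X := by
  intro e he
  rw [← isColoop_iff_mem_coloops, restrict_isColoop_iff (M.closure_subset_ground X)] at he
  by_contra heX
  exact he.1 <| M.closure_subset_closure_of_subset_closure
    (M.subset_closure_of_subset (subset_sdiff_singleton (M.subset_closure X hX) heX)
      (sdiff_subset.trans (M.closure_subset_ground X))) he.2

end Matroid

namespace PaperFormal

variable {α : Type*}

lemma eRk_eq_matroid_eRk (M : Matroid α) (X : Set α) : eRk M X = M.eRk X :=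
  le_antisymm (iSup₂_le fun _ hI ↦ hI.1.encard_le_eRk_of_subset hI.2) <|
    M.eRk_le_iff.2 fun I hIX hI ↦
      le_iSup₂ (f := fun I (_ : I ∈ {I | M.Indep I ∧ I ⊆ X}) ↦ I.encard) I ⟨hI, hIX⟩

lemma cyclicFlat_ground_sdiff_coloops (M : Matroid α) : CyclicFlat M (M.E \ M.coloops) := by
  refine ⟨isFlat_iff_closure_eq.2 ?_, fun e he ↦ ?_⟩
  · rw [closure_sdiff_eq_of_subset_coloops _ subset_rfl, closure_ground]
  have hcl : e ∈ M.closure (M.E \ {e}) :=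
    not_not.1 <| (isColoop_iff_notMem_closure_compl he.1).not.1 he.2
  have hsplit : M.E \ {e} = (M.E \ M.coloops) \ {e} ∪ M.coloops := by
    ext x
    by_cases hx : x ∈ M.coloops
    · simp [hx, M.coloops_subset_ground hx, show x ≠ e by rintro rfl; exact he.2 hx]
    · simp [hx]
  rw [hsplit, closure_union_eq_of_subset_coloops _ subset_rfl] at hcl
  exact hcl.resolve_right he.2

lemma CyclicFlat.of_restrict {M : Matroid α} {S A : Set α} (hS : M.IsFlat S)
    (hA : CyclicFlat (M ↾ S) A) : CyclicFlat M A := by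
  have hAS : A ⊆ S := hA.1.subset_ground
  have hcl : ∀ Y ⊆ A, (M ↾ S).closure Y = M.closure Y := fun Y hY ↦ by
    rw [restrict_closure_eq _ (hY.trans hAS) hS.subset_ground, inter_eq_left.2
      ((M.closure_subset_closure (hY.trans hAS)).trans hS.closure.subset)]
  refine ⟨isFlat_iff_closure_eq.2 ?_, fun e he ↦ ?_⟩
  · rw [← hcl A subset_rfl, hA.1.closure]
  · rw [← hcl _ sdiff_subset]
    exact hA.2 e he

lemma exists_cyclicFlat_eRk_add_encard_sdiff_le {M : Matroid α} {X : Set α} (hX : X ⊆ M.E) :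
    ∃ A, CyclicFlat M A ∧ M.eRk A + (X \ A).encard ≤ M.eRk X := by
  set S := M.closure X
  set K := (M ↾ S).coloops
  have hXS : X ⊆ S := M.subset_closure X hX
  have hKX : K ⊆ X := coloops_restrict_closure_subset hX
  have hXA : X \ (S \ K) = K := by
    ext e
    exact ⟨fun ⟨heX, he⟩ ↦ by_contra fun heK ↦ he ⟨hXS heX, heK⟩,
      fun heK ↦ ⟨hKX heK, fun he ↦ he.2 heK⟩⟩
  refine ⟨S \ K, (cyclicFlat_ground_sdiff_coloops _).of_restrict (M.isFlat_closure X), ?_⟩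
  have hrk := eRk_ground_sdiff_coloops_add_encard (M ↾ S)
  rw [restrict_ground_eq, restrict_eRk_eq _ sdiff_subset, eRank_restrict, eRk_closure_eq] at hrk
  rw [hXA, hrk]

/-- `N` is freer than `M` iff for every cyclic flat `F` of `N` there is a
cyclic flat `A` of `M` with `r_M(A) + |F - A| ≤ r_N(F)`. -/
theorem freer_iff_cyclicFlat (M N : Matroid α) (hE : M.E = N.E) :
    (∀ X ⊆ M.E, eRk M X ≤ eRk N X) ↔
      (∀ F, CyclicFlat N F →
        ∃ A, CyclicFlat M A ∧ eRk M A + (F \ A).encard ≤ eRk N F) := by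
  simp only [eRk_eq_matroid_eRk]
  constructor
  · intro hfree F hF
    have hFE : F ⊆ M.E := hE ▸ hF.1.subset_ground
    obtain ⟨A, hA, hAF⟩ := exists_cyclicFlat_eRk_add_encard_sdiff_le hFE
    exact ⟨A, hA, hAF.trans (hfree F hFE)⟩
  · intro hcyc X hX
    obtain ⟨F, hF, hFX⟩ := exists_cyclicFlat_eRk_add_encard_sdiff_le (hE ▸ hX)
    obtain ⟨A, hA, hAF⟩ := hcyc F hF
    calc M.eRk X ≤ M.eRk F + (X \ F).encard := M.eRk_le_eRk_add_encard_sdiff F X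
      _ ≤ N.eRk F + (X \ F).encard := by grw [M.eRk_le_eRk_add_encard_sdiff A F, hAF]
      _ ≤ N.eRk X := hFX

end PaperFormal
end
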